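/- arXiv:1708.02075 — 2 statements merged into one kernel-verified Lean document; each statement's English description precedes it below -/
import Mathlib

section
/- The max-plus matrix equation A ⊗ X ⊗ B = C (A m×m, B n×n, C m×n) is solvable if and only if X* = A♯ ⊗' C ⊗' B♯ satisfies A ⊗ X* ⊗ B = C; moreover, X* is then the maximum solution. -/
/-- Min-plus addition on `EReal`: agrees with `+` on finite values, with `⊤` absorbing. -/
noncomputable def mpAdd (a b : EReal) : EReal := -((-a) + (-b))

/-- Max-plus matrix multiplication. -/
noncomputable def maxMul {α β γ : Type*} [Fintype β]
    (A : Matrix α β EReal) (B : Matrix β γ EReal) : Matrix α γ EReal :=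
  fun i j => ⨆ k, A i k + B k j

/-- Min-plus matrix multiplication. -/
noncomputable def minMul {α β γ : Type*} [Fintype β]
    (A : Matrix α β EReal) (B : Matrix β γ EReal) : Matrix α γ EReal :=
  fun i j => ⨅ k, mpAdd (A i k) (B k j)

/-- Max-plus matrix-vector multiplication. -/
noncomputable def maxMulVec {α β : Type*} [Fintype β]
    (A : Matrix α β EReal) (x : β → EReal) : α → EReal :=
  fun i => ⨆ j, A i j + x j

/-- Min-plus matrix-vector multiplication. -/
noncomputable def minMulVec {α β : Type*} [Fintype β]
    (A : Matrix α β EReal) (x : β → EReal) : α → EReal :=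
  fun i => ⨅ j, mpAdd (A i j) (x j)

/-- Conjugate `A♯ = -Aᵀ` (sending `-∞` to `+∞` and vice versa). -/
noncomputable def conj {α β : Type*} (A : Matrix α β EReal) : Matrix β α EReal :=
  fun j i => -(A i j)

/-- Max-plus Kronecker product: block `(i,k),(j,l)` entry is `A i j + B k l`. -/
noncomputable def kron {α β γ δ : Type*} (A : Matrix α β EReal) (B : Matrix γ δ EReal) :
    Matrix (α × γ) (β × δ) EReal :=
  fun ik jl => A ik.1 jl.1 + B ik.2 jl.2

/-- Min-plus Kronecker product. -/
noncomputable def minKron {α β γ δ : Type*} (A : Matrix α β EReal) (B : Matrix γ δ EReal) :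
    Matrix (α × γ) (β × δ) EReal :=
  fun ik jl => mpAdd (A ik.1 jl.1) (B ik.2 jl.2)

/-- Column-stacking vectorization: `vec X (j, i) = X i j`. -/
def vec {α β : Type*} (X : Matrix α β EReal) : β × α → EReal := fun p => X p.2 p.1

/-- Entries lie in `ℝ ∪ {-∞}`, i.e. no `+∞` entries. -/
def RMaxEntries {α β : Type*} (A : Matrix α β EReal) : Prop := ∀ i j, A i j ≠ ⊤

/-- Doubly ℝ-astic: entries in `ℝ ∪ {-∞}`, with a finite entry in each row and column. -/
def DoublyRAstic {α β : Type*} (A : Matrix α β EReal) : Prop :=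
  (∀ i j, A i j ≠ ⊤) ∧ (∀ i, ∃ j, A i j ≠ ⊥) ∧ (∀ j, ∃ i, A i j ≠ ⊥)

/-- All entries of the matrix are finite reals. -/
def FiniteEntries {α β : Type*} (C : Matrix α β EReal) : Prop :=
  ∀ i j, ∃ r : ℝ, C i j = (r : EReal)

/-- All entries of the vector are finite reals. -/
def FiniteVec {α : Type*} (b : α → EReal) : Prop := ∀ i, ∃ r : ℝ, b i = (r : EReal)

/-!
The map `X ↦ A ⊗ X ⊗ B` is residuated: it is the lower adjoint of a Galois connection whose
upper adjoint is `Y ↦ A♯ ⊗' Y ⊗' B♯`. Entrywise this is the residuation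
`a + x ≤ c ↔ x ≤ mpAdd (-a) c` in `EReal`, which survives the infinite cases because `mpAdd`
lets `⊤` absorb while `+` lets `⊥` absorb.
For any Galois connection `l ⊣ u` one has `l (u (l X)) = l X` and `l X ≤ C ↔ X ≤ u C`, which
gives both the solvability criterion and maximality of `X* = u C`. Finally `X*` has no `+∞` entry
because every column of `A` and every row of `B` has a finite entry and `C` is finite.
-/

lemma mpAdd_comm (a b : EReal) : mpAdd a b = mpAdd b a := by
  rw [mpAdd, mpAdd, add_comm]

lemma mpAdd_ne_top {a b : EReal} (ha : a ≠ ⊤) (hb : b ≠ ⊤) : mpAdd a b ≠ ⊤ := by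
  simp [mpAdd, EReal.neg_eq_top_iff, EReal.add_eq_bot_iff, ha, hb]

lemma add_le_iff_le_mpAdd (a x c : EReal) : a + x ≤ c ↔ x ≤ mpAdd (-a) c := by
  rw [mpAdd, neg_neg]
  induction a using EReal.rec <;> induction x using EReal.rec <;> induction c using EReal.rec <;>
    simp_all [← EReal.coe_neg, ← EReal.coe_add, EReal.coe_le_coe_iff]
  all_goals constructor <;> intro <;> linarith

lemma add_le_iff_le_mpAdd' (x b c : EReal) : x + b ≤ c ↔ x ≤ mpAdd c (-b) := by
  rw [add_comm, mpAdd_comm, add_le_iff_le_mpAdd]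

lemma EReal.add_iSup_of_finite {ι : Type*} [Finite ι] (a : EReal) (f : ι → EReal) :
    a + ⨆ i, f i = ⨆ i, a + f i := by
  cases isEmpty_or_nonempty ι
  · simp
  · exact Finite.map_iSup_of_monotone f fun _ _ h => add_le_add_right h a

lemma EReal.iSup_add_of_finite {ι : Type*} [Finite ι] (f : ι → EReal) (b : EReal) :
    (⨆ i, f i) + b = ⨆ i, f i + b := by
  simp only [add_comm _ b, EReal.add_iSup_of_finite]

-- Mathlib's `Matrix.instPartialOrder` is the Loewner order (scoped in `MatrixOrder`).
noncomputable instance Matrix.entrywisePartialOrder {ι κ : Type*} :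
    PartialOrder (Matrix ι κ EReal) :=
  Pi.partialOrder

section MaxPlus

variable {ι κ μ ν : Type*}

lemma maxMul_assoc [Fintype κ] [Fintype μ] (A : Matrix ι κ EReal) (X : Matrix κ μ EReal)
    (B : Matrix μ ν EReal) : maxMul A (maxMul X B) = maxMul (maxMul A X) B := by
  ext i j
  simp only [maxMul, EReal.add_iSup_of_finite, EReal.iSup_add_of_finite, add_assoc]
  exact iSup_comm

lemma gc_maxMul_left [Fintype ι] [Fintype κ] (A : Matrix ι κ EReal) :
    GaloisConnection (maxMul A : Matrix κ ν EReal → _) (minMul (conj A)) := by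
  intro X Y
  change (∀ i j, _ ≤ _) ↔ ∀ k j, _ ≤ _
  simp only [maxMul, minMul, conj, iSup_le_iff, le_iInf_iff, add_le_iff_le_mpAdd]
  exact ⟨fun h k j i => h i j k, fun h i j k => h k j i⟩

lemma gc_maxMul_right [Fintype μ] [Fintype ν] (B : Matrix μ ν EReal) :
    GaloisConnection (fun X : Matrix ι μ EReal => maxMul X B) (fun Y => minMul Y (conj B)) := by
  intro X Y
  change (∀ i j, _ ≤ _) ↔ ∀ i l, _ ≤ _
  simp only [maxMul, minMul, conj, iSup_le_iff, le_iInf_iff, add_le_iff_le_mpAdd']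
  exact ⟨fun h i l j => h i j l, fun h i j l => h i l j⟩

lemma gc_maxMul_maxMul [Fintype ι] [Fintype κ] [Fintype μ] [Fintype ν]
    (A : Matrix ι κ EReal) (B : Matrix μ ν EReal) :
    GaloisConnection (fun X => maxMul A (maxMul X B))
      (fun Y => minMul (conj A) (minMul Y (conj B))) := by
  simpa only [Function.comp_def, maxMul_assoc] using
    (gc_maxMul_left A).compose (gc_maxMul_right B)

lemma minMul_conj_left_ne_top [Fintype ι] {A : Matrix ι κ EReal}
    {Y : Matrix ι ν EReal} {k : κ} {j : ν} (i : ι) (hA : A i k ≠ ⊥) (hY : Y i j ≠ ⊤) :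
    minMul (conj A) Y k j ≠ ⊤ :=
  ne_top_of_le_ne_top (mpAdd_ne_top (EReal.neg_eq_top_iff.not.mpr hA) hY)
    (iInf_le (fun i => mpAdd (conj A k i) (Y i j)) i)

lemma minMul_conj_right_ne_top [Fintype ν] {Y : Matrix ι ν EReal}
    {B : Matrix μ ν EReal} {i : ι} {l : μ} (j : ν) (hY : Y i j ≠ ⊤) (hB : B l j ≠ ⊥) :
    minMul Y (conj B) i l ≠ ⊤ :=
  ne_top_of_le_ne_top (mpAdd_ne_top hY (EReal.neg_eq_top_iff.not.mpr hB))
    (iInf_le (fun j => mpAdd (Y i j) (conj B j l)) j)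

end MaxPlus

theorem stmt6 {m n : ℕ} (A : Matrix (Fin m) (Fin m) EReal) (B : Matrix (Fin n) (Fin n) EReal)
    (C : Matrix (Fin m) (Fin n) EReal)
    (hA : DoublyRAstic A) (hB : DoublyRAstic B) (hC : FiniteEntries C) :
    ((∃ X : Matrix (Fin m) (Fin n) EReal, RMaxEntries X ∧ maxMul A (maxMul X B) = C) ↔
      maxMul A (maxMul (minMul (conj A) (minMul C (conj B))) B) = C) ∧
    (∀ X : Matrix (Fin m) (Fin n) EReal, RMaxEntries X → maxMul A (maxMul X B) = C →
      ∀ i j, X i j ≤ minMul (conj A) (minMul C (conj B)) i j) := by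
  have gc := gc_maxMul_maxMul A B
  refine ⟨⟨?_, fun h => ⟨_, ?_, h⟩⟩, fun X _ h => gc.le_iff_le.mp h.le⟩
  · rintro ⟨X, -, rfl⟩
    exact gc.l_u_l_eq_l X
  · intro k l
    obtain ⟨i, hi⟩ := hA.2.2 k
    obtain ⟨j, hj⟩ := hB.2.1 l
    obtain ⟨r, hr⟩ := hC i j
    exact minMul_conj_left_ne_top i hi (minMul_conj_right_ne_top j (hr ▸ EReal.coe_ne_top r) hj)
end

section
/- For any X satisfying ⊕_{k=1}^p A_k ⊗ X ⊗ B_k ≤ C, we have X ≤ ⊕'_{k=1}^p A_k♯ ⊗' C ⊗' B_k♯; i.e., the candidate principal solution is an entrywise upper bound for all subsolutions of the Sylvester inequality. -/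
theorem EReal.add_le_iff_add_neg_le_neg (a x c : EReal) : a + x ≤ c ↔ a + -c ≤ -x := by
  induction a using EReal.rec <;> induction x using EReal.rec <;> induction c using EReal.rec <;>
    simp [← EReal.coe_neg, ← EReal.coe_add, add_comm]

theorem gc_add_left_mpAdd (a : EReal) : GaloisConnection (a + ·) (mpAdd (-a)) := fun x c => by
  rw [mpAdd, neg_neg, EReal.le_neg, EReal.add_le_iff_add_neg_le_neg]

theorem gc_add_right_mpAdd (b : EReal) : GaloisConnection (· + b) (mpAdd · (-b)) := fun x c => by
  simpa only [add_comm x b, mpAdd, add_comm (-c)] using gc_add_left_mpAdd b x c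

theorem EReal.add_iSup {ι : Sort*} (a : EReal) (f : ι → EReal) :
    a + ⨆ i, f i = ⨆ i, a + f i :=
  (gc_add_left_mpAdd a).l_iSup

theorem EReal.iSup_add {ι : Sort*} (f : ι → EReal) (b : EReal) :
    (⨆ i, f i) + b = ⨆ i, f i + b :=
  (gc_add_right_mpAdd b).l_iSup

theorem maxMul_assoc_s12 {α β γ δ : Type*} [Fintype β] [Fintype γ] (A : Matrix α β EReal)
    (B : Matrix β γ EReal) (C : Matrix γ δ EReal) :
    maxMul (maxMul A B) C = maxMul A (maxMul B C) := by
  funext i l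
  simp only [maxMul, EReal.iSup_add, EReal.add_iSup, add_assoc]
  exact iSup_comm

theorem maxMul_le_iff_le_minMul_conj_left {α β γ : Type*} [Fintype α] [Fintype β]
    {A : Matrix α β EReal} {X : Matrix β γ EReal} {C : Matrix α γ EReal} :
    (∀ i j, maxMul A X i j ≤ C i j) ↔ ∀ i j, X i j ≤ minMul (conj A) C i j := by
  simp only [maxMul, minMul, conj, iSup_le_iff, le_iInf_iff, ← gc_add_left_mpAdd _ _ _]
  exact ⟨fun h k j i => h i j k, fun h i j k => h k j i⟩

theorem maxMul_le_iff_le_minMul_conj_right {α β γ : Type*} [Fintype β] [Fintype γ]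
    {X : Matrix α β EReal} {B : Matrix β γ EReal} {C : Matrix α γ EReal} :
    (∀ i j, maxMul X B i j ≤ C i j) ↔ ∀ i j, X i j ≤ minMul C (conj B) i j := by
  simp only [maxMul, minMul, conj, iSup_le_iff, le_iInf_iff, ← gc_add_right_mpAdd _ _ _]
  exact ⟨fun h i k j => h i j k, fun h i j k => h i k j⟩

theorem stmt12_general {m n p : ℕ} (A : Fin p → Matrix (Fin m) (Fin m) EReal)
    (B : Fin p → Matrix (Fin n) (Fin n) EReal) (C X : Matrix (Fin m) (Fin n) EReal)
    (h : ∀ i j, (⨆ k, maxMul (A k) (maxMul X (B k)) i j) ≤ C i j) :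
    ∀ i j, X i j ≤ ⨅ k, minMul (conj (A k)) (minMul C (conj (B k))) i j := by
  intro i j
  refine le_iInf fun k => ?_
  have hAXB : ∀ a b, maxMul (maxMul (A k) X) (B k) a b ≤ C a b := fun a b => by
    rw [maxMul_assoc_s12]
    exact (le_iSup (fun k => maxMul (A k) (maxMul X (B k)) a b) k).trans (h a b)
  exact maxMul_le_iff_le_minMul_conj_left.mp (maxMul_le_iff_le_minMul_conj_right.mp hAXB) i j

theorem stmt12 {m n p : ℕ} (A : Fin p → Matrix (Fin m) (Fin m) EReal)
    (B : Fin p → Matrix (Fin n) (Fin n) EReal) (C X : Matrix (Fin m) (Fin n) EReal)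
    (hC : FiniteEntries C) (hX : RMaxEntries X)
    (h : ∀ i j, (⨆ k, maxMul (A k) (maxMul X (B k)) i j) ≤ C i j) :
    ∀ i j, X i j ≤ ⨅ k, minMul (conj (A k)) (minMul C (conj (B k))) i j :=
  stmt12_general A B C X h
end
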